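/- Let θ be a system on (G, X) and let m be a probability measure on G × X equivalent to λ ⊗ κ. Then Δ(m, θ^{⊛k}) → 0 as k → ∞ if and only if D_{θ^{⊛k}}(g, x) → 0 as k → ∞ for (λ ⊗ κ)-almost every (g, x) ∈ G × X. -/

import Mathlib

/-!
The discrepancies `D_{θ^{⊛k}}(g, x)` decrease in `k`. Indeed `θ^{⊛(k+1)} = θ^{⊛k} ⊛ θ` by
associativity of `⊛`, and then `g (θ^{⊛(k+1)})^{g⁻¹·x}` and `(θ^{⊛(k+1)})^x` are the images
of `g (θ^{⊛k})^{g⁻¹·x}` and `(θ^{⊛k})^x` under the same Markov kernel `u ↦ u θ^{u⁻¹·x}`, which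
cannot increase total variation. So `D_{θ^{⊛k}}` decreases pointwise to some `D_∞ ≥ 0`, and by monotone
convergence `Δ(m, θ^{⊛k}) → ∫ D_∞ dm`. This vanishes iff `D_∞ = 0` `m`-a.e., that is
`(λ ⊗ κ)`-a.e., since `m` and `λ ⊗ κ` have the same null sets.
-/

open MeasureTheory Filter Topology

/-- Total variation norm `‖μ − ν‖` of the difference of two finite measures. -/
noncomputable def tv {α : Type*} [MeasurableSpace α] (μ ν : Measure α) : ℝ :=
  ((μ - ν) Set.univ + (ν - μ) Set.univ).toReal

/-- Pushforward `gμ` of a measure on `G` under the left translation `h ↦ g * h`. -/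
noncomputable def ltrans {G : Type*} [MeasurableSpace G] [Mul G] (g : G) (μ : Measure G) :
    Measure G :=
  μ.map (fun h => g * h)

/-- Convolution `α * β` of measures on `G`: the pushforward of `α ⊗ β` under
`(g, h) ↦ g * h`. -/
noncomputable def mconv {G : Type*} [MeasurableSpace G] [Mul G] (μ ν : Measure G) : Measure G :=
  (μ.prod ν).map (fun p : G × G => p.1 * p.2)

/-- `convPow θ k = θ^{*k}`, the `k`-th convolution power of `θ` (with `θ^{*0} = δ_1`). -/
noncomputable def convPow {G : Type*} [MeasurableSpace G] [Monoid G] (θ : Measure G) :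
    ℕ → Measure G
  | 0 => Measure.dirac 1
  | (k + 1) => mconv θ (convPow θ k)

/-- Mean discrepancy `Δ(m, θ) = ∫_G ‖gθ − θ‖ dm(g)`. -/
noncomputable def disc {G : Type*} [MeasurableSpace G] [Mul G] (m θ : Measure G) : ℝ :=
  ∫ g, tv (ltrans g θ) θ ∂m

/-- A system on `(G, X)`: a Markov kernel `x ↦ θ^x` from `X` to `G`, i.e. a measurable
family of Borel probability measures on `G`. -/
def IsSystem {G X : Type*} [MeasurableSpace G] [MeasurableSpace X] (θ : X → Measure G) : Prop :=
  Measurable θ ∧ ∀ x, IsProbabilityMeasure (θ x)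

/-- Discrepancy function of a system: `D_θ(g, x) = ‖g θ^{g⁻¹·x} − θ^x‖`. -/
noncomputable def Dsys {G X : Type*} [MeasurableSpace G] [Group G] [MulAction G X]
    (θ : X → Measure G) (p : G × X) : ℝ :=
  tv (ltrans p.1 (θ (p.1⁻¹ • p.2))) (θ p.2)

/-- Convolution of systems: `(θ⊛φ)^x = ∫_G g φ^{g⁻¹·x} dθ^x(g)`. -/
noncomputable def sconv {G X : Type*} [MeasurableSpace G] [Group G] [MulAction G X]
    (θ φ : X → Measure G) : X → Measure G :=
  fun x => (θ x).bind fun g => ltrans g (φ (g⁻¹ • x))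

/-- `k`-fold convolution power `θ^{⊛k}` of a system (with `θ^{⊛0} = δ_1` fibrewise). -/
noncomputable def sconvPow {G X : Type*} [MeasurableSpace G] [Group G] [MulAction G X]
    (θ : X → Measure G) : ℕ → X → Measure G
  | 0 => fun _ => Measure.dirac 1
  | (k + 1) => sconv θ (sconvPow θ k)

/-- Mean discrepancy `Δ(m, θ) = ∫_{G×X} D_θ dm` of a system against a measure on `G × X`. -/
noncomputable def sdisc {G X : Type*} [MeasurableSpace G] [MeasurableSpace X] [Group G]
    [MulAction G X] (m : Measure (G × X)) (θ : X → Measure G) : ℝ :=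
  ∫ p, Dsys θ p ∂m

/-- The measure `mQ_φ` on `G × X`:
`mQ_φ(A) = ∫_{G×X} ∫_G 1_A(g h, x) dφ^{g⁻¹·x}(h) dm(g, x)`. -/
noncomputable def mQ {G X : Type*} [MeasurableSpace G] [MeasurableSpace X] [Group G]
    [MulAction G X] (m : Measure (G × X)) (φ : X → Measure G) : Measure (G × X) :=
  m.bind fun p => (φ (p.1⁻¹ • p.2)).map fun h => (p.1 * h, p.2)

/-- The measure `m̄Q_φ` on `G × X`:
`m̄Q_φ(A) = ∫_{G×X} ∫_G 1_A(h, x) dφ^{x}(h) dm(g, x)`. -/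
noncomputable def mbarQ {G X : Type*} [MeasurableSpace G] [MeasurableSpace X] [Group G]
    (m : Measure (G × X)) (φ : X → Measure G) : Measure (G × X) :=
  m.bind fun p => (φ p.2).map fun h => (h, p.2)

open ProbabilityTheory
open scoped ENNReal

namespace MeasureTheory.Measure

variable {α β γ : Type*} [MeasurableSpace α] [MeasurableSpace β] [MeasurableSpace γ]

lemma bind_map (μ : Measure α) {T : α → β} (hT : Measurable T) {F : β → Measure γ}
    (hF : Measurable F) : (μ.map T).bind F = μ.bind (F ∘ T) := by
  rw [Measure.bind, Measure.bind, Measure.map_map hF hT]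

lemma comp_mono {μ ν : Measure α} (κ : Kernel α β) (h : μ ≤ ν) : κ ∘ₘ μ ≤ κ ∘ₘ ν :=
  le_iff.2 fun s hs => by
    simp only [bind_apply hs κ.aemeasurable]
    exact lintegral_mono' h le_rfl

lemma comp_sub_comp_le (κ : Kernel α β) (μ ν : Measure α) [IsFiniteMeasure μ]
    [IsFiniteMeasure ν] : κ ∘ₘ μ - κ ∘ₘ ν ≤ κ ∘ₘ (μ - ν) :=
  sub_le_of_le_add <| by
    rw [← comp_add]
    exact comp_mono κ (sub_le_iff_le_add.mp le_rfl)

end MeasureTheory.Measure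

section TotalVariation

variable {α β : Type*} [MeasurableSpace α] [MeasurableSpace β]

lemma tv_nonneg (μ ν : Measure α) : 0 ≤ tv μ ν := ENNReal.toReal_nonneg

lemma tv_le_two (μ ν : Measure α) [IsProbabilityMeasure μ] [IsProbabilityMeasure ν] :
    tv μ ν ≤ 2 := by
  have h : (μ - ν) Set.univ + (ν - μ) Set.univ ≤ 1 + 1 :=
    add_le_add ((Measure.sub_le (μ := μ) (ν := ν) _).trans_eq measure_univ)
      ((Measure.sub_le (μ := ν) (ν := μ) _).trans_eq measure_univ)
  exact (ENNReal.toReal_mono (by norm_num) h).trans_eq (by norm_num)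

lemma tv_comp_le (κ : Kernel α β) [IsMarkovKernel κ] (μ ν : Measure α) [IsFiniteMeasure μ]
    [IsFiniteMeasure ν] : tv (κ ∘ₘ μ) (κ ∘ₘ ν) ≤ tv μ ν := by
  have hfin : (μ - ν) Set.univ + (ν - μ) Set.univ ≠ ∞ := by finiteness
  refine ENNReal.toReal_mono hfin (add_le_add ?_ ?_)
  · exact (Measure.comp_sub_comp_le κ μ ν _).trans_eq Measure.comp_apply_univ
  · exact (Measure.comp_sub_comp_le κ ν μ _).trans_eq Measure.comp_apply_univ

lemma tv_withDensity {μ : Measure α} {f g : α → ℝ≥0∞} (hf : Measurable f) (hg : Measurable g)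
    [IsFiniteMeasure (μ.withDensity f)] [IsFiniteMeasure (μ.withDensity g)] :
    tv (μ.withDensity f) (μ.withDensity g) = (∫⁻ x, f x - g x ∂μ + ∫⁻ x, g x - f x ∂μ).toReal := by
  rw [tv, ← Measure.withDensity_sub hf hg, ← Measure.withDensity_sub hg hf,
    withDensity_apply _ .univ, withDensity_apply _ .univ, Measure.restrict_univ]
  rfl

lemma measurable_tv [MeasurableSpace.CountablyGenerated β] (κ η : Kernel α β) [IsFiniteKernel κ]
    [IsFiniteKernel η] : Measurable fun a => tv (κ a) (η a) := by
  set f := κ.rnDeriv (κ + η)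
  set g := η.rnDeriv (κ + η)
  have hκ a : (κ a + η a).withDensity (f a) = κ a := by
    rw [← add_apply, ← Kernel.withDensity_apply _ (κ.measurable_rnDeriv _)]
    exact Kernel.withDensity_rnDeriv_eq
      (Measure.absolutelyContinuous_of_le (by simpa using Measure.le_add_right le_rfl))
  have hη a : (κ a + η a).withDensity (g a) = η a := by
    rw [← add_apply, ← Kernel.withDensity_apply _ (η.measurable_rnDeriv _)]
    exact Kernel.withDensity_rnDeriv_eq
      (Measure.absolutelyContinuous_of_le (by simpa using Measure.le_add_left le_rfl))
  have htv a : tv (κ a) (η a) =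
      (∫⁻ x, f a x - g a x ∂(κ + η) a + ∫⁻ x, g a x - f a x ∂(κ + η) a).toReal := by
    rw [add_apply]
    have : IsFiniteMeasure ((κ a + η a).withDensity (f a)) := by rw [hκ a]; infer_instance
    have : IsFiniteMeasure ((κ a + η a).withDensity (g a)) := by rw [hη a]; infer_instance
    have h := tv_withDensity (μ := κ a + η a) (f := f a) (g := g a)
      (κ.measurable_rnDeriv_right (κ + η) a)
      (η.measurable_rnDeriv_right (κ + η) a)
    rwa [hκ a, hη a] at h
  simp_rw [htv]
  have hf := κ.measurable_rnDeriv (κ + η)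
  have hg := η.measurable_rnDeriv (κ + η)
  exact ((hf.sub hg).lintegral_kernel_prod_right.add
    (hg.sub hf).lintegral_kernel_prod_right).ennreal_toReal

end TotalVariation

section Translation

variable {α G : Type*} [MeasurableSpace α] [MeasurableSpace G] [Group G]

lemma ltrans_one (μ : Measure G) : ltrans 1 μ = μ := by
  simp [ltrans]

lemma measurable_ltrans_apply [MeasurableMul₂ G] (K : Kernel α G) [IsSFiniteKernel K]
    {f : α → G} (hf : Measurable f) : Measurable fun a => ltrans (f a) (K a) := by
  have hK : ⇑((Kernel.deterministic f hf ×ₖ K).map fun q => q.1 * q.2) =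
      fun a => ltrans (f a) (K a) := by
    ext a : 1
    rw [Kernel.map_apply _ measurable_mul, Kernel.prod_apply, Kernel.deterministic_apply,
      Measure.dirac_prod, Measure.map_map measurable_mul measurable_prodMk_left]
    rfl
  exact hK ▸ Kernel.measurable _

variable [MeasurableMul G]

instance (g : G) (μ : Measure G) [IsProbabilityMeasure μ] : IsProbabilityMeasure (ltrans g μ) :=
  Measure.isProbabilityMeasure_map (measurable_const_mul g).aemeasurable

lemma measurable_ltrans (g : G) : Measurable (ltrans g) :=
  Measure.measurable_map _ (measurable_const_mul g)

lemma ltrans_ltrans (g h : G) (μ : Measure G) : ltrans g (ltrans h μ) = ltrans (g * h) μ := by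
  simp only [ltrans, Measure.map_map (measurable_const_mul g) (measurable_const_mul h),
    Function.comp_def, mul_assoc]

lemma ltrans_dirac (g h : G) : ltrans g (Measure.dirac h) = Measure.dirac (g * h) :=
  Measure.map_dirac' (measurable_const_mul g) h

lemma ltrans_bind (g : G) (μ : Measure α) {F : α → Measure G} (hF : Measurable F) :
    ltrans g (μ.bind F) = μ.bind fun a => ltrans g (F a) := by
  ext s hs
  rw [ltrans, Measure.map_apply (measurable_const_mul g) hs,
    Measure.bind_apply (measurable_const_mul g hs) hF.aemeasurable,
    Measure.bind_apply hs (f := fun a => ltrans g (F a))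
      ((measurable_ltrans g).comp hF).aemeasurable]
  simp only [ltrans, Measure.map_apply (measurable_const_mul g) hs]

end Translation

section Elementary

variable {G X : Type*} [MeasurableSpace G] [Group G] [MulAction G X]

lemma dsys_nonneg (θ : X → Measure G) (p : G × X) : 0 ≤ Dsys θ p := tv_nonneg _ _

lemma IsSystem.dsys_le_two [MeasurableMul G] [MeasurableSpace X] {θ : X → Measure G}
    (hθ : IsSystem θ) (p : G × X) : Dsys θ p ≤ 2 := by
  have := hθ.2 p.2
  have := hθ.2 (p.1⁻¹ • p.2)
  exact tv_le_two _ _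

lemma sconv_dirac_one [MeasurableMul G] (θ : X → Measure G) :
    sconv θ (fun _ => Measure.dirac 1) = θ := by
  funext x
  simp only [sconv, ltrans_dirac, mul_one, Measure.bind_dirac]

end Elementary

section Systems

variable {G X : Type*} [MeasurableSpace G] [Group G] [MeasurableMul₂ G] [MeasurableInv G]
  [MeasurableSpace X] [MulAction G X] [MeasurableSMul₂ G X] {θ φ ψ : X → Measure G}

def IsSystem.kernel (hθ : IsSystem θ) : Kernel X G := ⟨θ, hθ.1⟩

instance (hθ : IsSystem θ) : IsMarkovKernel hθ.kernel := ⟨hθ.2⟩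

noncomputable def IsSystem.translateKernel (hθ : IsSystem θ) : Kernel (G × X) G :=
  ⟨fun p => ltrans p.1 (θ (p.1⁻¹ • p.2)),
    measurable_ltrans_apply (hθ.kernel.comap (fun p : G × X => p.1⁻¹ • p.2) (by fun_prop))
      measurable_fst⟩

lemma IsSystem.translateKernel_apply (hθ : IsSystem θ) (p : G × X) :
    hθ.translateKernel p = ltrans p.1 (θ (p.1⁻¹ • p.2)) := rfl

instance (hθ : IsSystem θ) : IsMarkovKernel hθ.translateKernel :=
  ⟨fun p => by have := hθ.2 (p.1⁻¹ • p.2); rw [hθ.translateKernel_apply]; infer_instance⟩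

lemma IsSystem.measurable_translate (hθ : IsSystem θ) (x : X) :
    Measurable fun g : G => ltrans g (θ (g⁻¹ • x)) :=
  hθ.translateKernel.measurable.comp (measurable_id.prodMk measurable_const)

lemma sconv_eq_comp (hθ : IsSystem θ) (hφ : IsSystem φ) :
    sconv θ φ = ⇑(hφ.translateKernel ∘ₖ (hθ.kernel ×ₖ Kernel.id)) := by
  funext x
  rw [Kernel.comp_apply, Kernel.prod_apply, Kernel.id_apply, Measure.prod_dirac,
    Measure.bind_map _ measurable_prodMk_right hφ.translateKernel.measurable]
  rfl

lemma IsSystem.sconv (hθ : IsSystem θ) (hφ : IsSystem φ) : IsSystem (sconv θ φ) := by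
  rw [sconv_eq_comp hθ hφ]
  exact ⟨Kernel.measurable _, fun _ => inferInstance⟩

lemma IsSystem.sconvPow (hθ : IsSystem θ) (k : ℕ) : IsSystem (sconvPow θ k) := by
  induction k with
  | zero =>
    exact ⟨measurable_const, fun _ => inferInstanceAs (IsProbabilityMeasure (Measure.dirac _))⟩
  | succ k ih => exact hθ.sconv ih

/-- The cocycle identity behind the associativity of `sconv`. -/
lemma ltrans_sconv (hψ : IsSystem ψ) (g : G) (x : X) :
    ltrans g (sconv φ ψ (g⁻¹ • x)) =
      (ltrans g (φ (g⁻¹ • x))).bind fun u => ltrans u (ψ (u⁻¹ • x)) := by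
  rw [sconv, ltrans_bind _ _ (hψ.measurable_translate _), ltrans,
    Measure.bind_map _ (measurable_const_mul g) (hψ.measurable_translate x)]
  congr 1
  funext h
  rw [Function.comp_apply, ltrans_ltrans, mul_inv_rev, mul_smul]

lemma sconv_assoc (hφ : IsSystem φ) (hψ : IsSystem ψ) :
    sconv θ (sconv φ ψ) = sconv (sconv θ φ) ψ := by
  funext x
  simp only [sconv]
  rw [Measure.bind_bind (hφ.measurable_translate x).aemeasurable
    (hψ.measurable_translate x).aemeasurable]
  congr 1
  funext g
  exact ltrans_sconv hψ g x

lemma dirac_one_sconv (hθ : IsSystem θ) : sconv (fun _ => Measure.dirac 1) θ = θ := by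
  funext x
  rw [sconv, Measure.dirac_bind (hθ.measurable_translate x), inv_one, one_smul, ltrans_one]

lemma sconvPow_succ' (hθ : IsSystem θ) (k : ℕ) :
    sconvPow θ (k + 1) = sconv (sconvPow θ k) θ := by
  induction k with
  | zero => exact (sconv_dirac_one θ).trans (dirac_one_sconv hθ).symm
  | succ k ih =>
    calc sconvPow θ (k + 2) = sconv θ (sconv (sconvPow θ k) θ) := congrArg (sconv θ) ih
      _ = sconv (sconvPow θ (k + 1)) θ := sconv_assoc (hθ.sconvPow k) hθ

lemma dsys_sconv_le (hφ : IsSystem φ) (hψ : IsSystem ψ) (p : G × X) :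
    Dsys (sconv φ ψ) p ≤ Dsys φ p := by
  obtain ⟨g, x⟩ := p
  have := hφ.2 x
  have := hφ.2 (g⁻¹ • x)
  let K := hψ.translateKernel.comap (·, x) (measurable_id.prodMk measurable_const)
  change tv (ltrans g (sconv φ ψ (g⁻¹ • x))) (K ∘ₘ φ x) ≤ tv (ltrans g (φ (g⁻¹ • x))) (φ x)
  rw [ltrans_sconv hψ]
  exact tv_comp_le K _ _

lemma antitone_dsys_sconvPow (hθ : IsSystem θ) (p : G × X) :
    Antitone fun k => Dsys (sconvPow θ k) p :=
  antitone_nat_of_succ_le fun k => by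
    rw [sconvPow_succ' hθ k]
    exact dsys_sconv_le (hθ.sconvPow k) hθ p

lemma IsSystem.measurable_dsys [MeasurableSpace.CountablyGenerated G] (hθ : IsSystem θ) :
    Measurable (Dsys θ) :=
  measurable_tv hθ.translateKernel (hθ.kernel.comap Prod.snd measurable_snd)

end Systems

lemma tendsto_integral_zero_iff_ae_of_antitone {α : Type*} [MeasurableSpace α] {μ : Measure α}
    {f : ℕ → α → ℝ} (hf : ∀ n, Integrable (f n) μ) (hf_nonneg : ∀ n a, 0 ≤ f n a)
    (hf_anti : ∀ a, Antitone fun n => f n a) :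
    Tendsto (fun n => ∫ a, f n a ∂μ) atTop (𝓝 0) ↔
      ∀ᵐ a ∂μ, Tendsto (fun n => f n a) atTop (𝓝 0) := by
  set F := fun a => ⨅ n, f n a
  have hF_nonneg a : 0 ≤ F a := le_ciInf fun n => hf_nonneg n a
  have hf_tendsto a : Tendsto (fun n => f n a) atTop (𝓝 (F a)) :=
    tendsto_atTop_ciInf (hf_anti a) ⟨0, by rintro _ ⟨n, rfl⟩; exact hf_nonneg n a⟩
  have hF : Integrable F μ :=
    (hf 0).mono' (aestronglyMeasurable_of_tendsto_ae _ (fun n => (hf n).1)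
      (ae_of_all _ hf_tendsto)) (ae_of_all _ fun a => by
        rw [Real.norm_of_nonneg (hF_nonneg a)]
        exact ciInf_le ⟨0, by rintro _ ⟨n, rfl⟩; exact hf_nonneg n a⟩ 0)
  have hlim := integral_tendsto_of_tendsto_of_antitone hf hF (ae_of_all _ hf_anti)
    (ae_of_all _ hf_tendsto)
  calc Tendsto (fun n => ∫ a, f n a ∂μ) atTop (𝓝 0) ↔ ∫ a, F a ∂μ = 0 :=
        ⟨tendsto_nhds_unique hlim, fun h => h ▸ hlim⟩
    _ ↔ F =ᵐ[μ] 0 := integral_eq_zero_iff_of_nonneg hF_nonneg hF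
    _ ↔ ∀ᵐ a ∂μ, Tendsto (fun n => f n a) atTop (𝓝 0) :=
        eventually_congr (ae_of_all _ fun a =>
          ⟨fun h => by rw [← show F a = 0 from h]; exact hf_tendsto a,
            tendsto_nhds_unique (hf_tendsto a)⟩)

theorem stmt16_general {G X : Type*} [TopologicalSpace G] [Group G] [IsTopologicalGroup G]
    [SecondCountableTopology G] [MeasurableSpace G] [BorelSpace G]
    [MeasurableSpace X] [MulAction G X] [MeasurableSMul₂ G X]
    (lam : Measure G)
    (κ : Measure X)
    (θ : X → Measure G) (hθ : IsSystem θ)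
    (m : Measure (G × X)) (hm : IsProbabilityMeasure m)
    (hmac : m ≪ lam.prod κ) (hacm : lam.prod κ ≪ m) :
    Tendsto (fun k => sdisc m (sconvPow θ k)) atTop (nhds 0) ↔
      ∀ᵐ p ∂(lam.prod κ),
        Tendsto (fun k => Dsys (sconvPow θ k) p) atTop (nhds 0) := by
  have hint k : Integrable (Dsys (sconvPow θ k)) m :=
    .of_bound (hθ.sconvPow k).measurable_dsys.aestronglyMeasurable 2 (ae_of_all _ fun p => by
      rw [Real.norm_of_nonneg (dsys_nonneg _ p)]
      exact (hθ.sconvPow k).dsys_le_two p)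
  rw [← le_antisymm hmac.ae_le hacm.ae_le]
  exact tendsto_integral_zero_iff_ae_of_antitone hint (fun k => dsys_nonneg _)
    (antitone_dsys_sconvPow hθ)

/-- For a system `θ` on `(G, X)` and a probability measure `m` on `G × X`
equivalent to `λ ⊗ κ`: `Δ(m, θ^{⊛k}) → 0` as `k → ∞` iff `D_{θ^{⊛k}}(g, x) → 0` as
`k → ∞` for `(λ ⊗ κ)`-almost every `(g, x)`. -/
theorem stmt16 {G X : Type*} [TopologicalSpace G] [Group G] [IsTopologicalGroup G]
    [LocallyCompactSpace G] [SecondCountableTopology G] [MeasurableSpace G] [BorelSpace G]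
    [MeasurableSpace X] [StandardBorelSpace X] [MulAction G X] [MeasurableSMul₂ G X]
    (lam : Measure G) (hlam : lam.IsHaarMeasure)
    (κ : Measure X) (hκ : SigmaFinite κ)
    (θ : X → Measure G) (hθ : IsSystem θ)
    (m : Measure (G × X)) (hm : IsProbabilityMeasure m)
    (hmac : m ≪ lam.prod κ) (hacm : lam.prod κ ≪ m) :
    Tendsto (fun k => sdisc m (sconvPow θ k)) atTop (nhds 0) ↔
      ∀ᵐ p ∂(lam.prod κ),
        Tendsto (fun k => Dsys (sconvPow θ k) p) atTop (nhds 0) :=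
  stmt16_general lam κ θ hθ m hm hmac hacm
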